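/- arXiv:1712.06177 — 3 statements merged into one kernel-verified Lean document; each statement's English description precedes it below -/
import Mathlib

section
/- Let R be an algebra, α an endomorphism of R, δ an α-derivation, and A = R[t; α, δ] the Ore extension. Then the bimodule of relative differential 1-forms Ω¹_R(A) is isomorphic as an A-bimodule to A_α ⊗_R A, where A_α is A with right R-action twisted by α. Explicitly, the isomorphism sends f ⊗ g to f·(dt)·g. -/
universe u

/-- `A` (with embedding `ι` and distinguished element `t`) is the Ore extension
`R[t; α, δ]`: the relation `t·r = α(r)·t + δ(r)` holds and every element of `A` is
uniquely a finite sum `∑ᵢ ι(rᵢ)·tⁱ`. -/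
structure IsOreExtension (k : Type u) [Field k] (R : Type u) [Ring R] [Algebra k R]
    (α : R → R) (δ : R → R)
    (A : Type u) [Ring A] [Algebra k A] (ι : R →ₐ[k] A) (t : A) : Prop where
  rel : ∀ r : R, t * ι r = ι (α r) * t + ι (δ r)
  repr : ∀ a : A, ∃! c : ℕ →₀ R, a = c.sum fun i r => ι r * t ^ i

/-- `Ω` (an `A`-bimodule) together with `d : A → Ω` is the Cuntz–Quillen bimodule of
relative differential 1-forms `Ω¹_R(A)`: `d` is an `R`-derivation (vanishing on the
image of `R`) which is universal among `R`-derivations of `A` into `A`-bimodules. -/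
structure IsRelativeDifferentials (R A : Type u) [Ring R] [Ring A] (η : R →+* A)
    (Ω : Type u) [AddCommGroup Ω] [Module A Ω] [Module Aᵐᵒᵖ Ω] (d : A →+ Ω) : Prop where
  d_eta : ∀ r : R, d (η r) = 0
  leibniz : ∀ a b : A, d (a * b) = MulOpposite.op b • d a + a • d b
  universal : ∀ (M : Type u) [AddCommGroup M] [Module A M] [Module Aᵐᵒᵖ M] (D : A →+ M),
      (∀ r : R, D (η r) = 0) →
      (∀ a b : A, D (a * b) = MulOpposite.op b • D a + a • D b) →
      ∃! φ : Ω →+ M, (∀ (a : A) (x : Ω), φ (a • x) = a • φ x) ∧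
        (∀ (b : A) (x : Ω), φ (MulOpposite.op b • x) = MulOpposite.op b • φ x) ∧
        ∀ a : A, φ (d a) = D a

/-- `T` (with biadditive `τ`) is the twisted tensor product `A_α ⊗_R A`, where `A_α`
is `A` with right `R`-action twisted by `α` (`f ∘ r = f·η(α r)`): `τ` is balanced for
the twisted action and universal among such balanced biadditive maps. -/
structure IsTwistedTensor (R A : Type u) [Ring R] [Ring A] (η : R →+* A) (α : R → R)
    (T : Type u) [AddCommGroup T] (τ : A →+ A →+ T) : Prop where
  balanced : ∀ (f : A) (r : R) (g : A), τ (f * η (α r)) g = τ f (η r * g)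
  universal : ∀ (C : Type u) [AddCommGroup C] (g' : A →+ A →+ C),
      (∀ (f : A) (r : R) (g : A), g' (f * η (α r)) g = g' f (η r * g)) →
      ∃! φ : T →+ C, ∀ f g : A, φ (τ f g) = g' f g

/-- Let `A = R[t; α, δ]` be an Ore extension.  Then the bimodule of relative
differential 1-forms `Ω¹_R(A)` is isomorphic as an `A`-bimodule to `A_α ⊗_R A`;
explicitly, the isomorphism sends `f ⊗ g` to `f·(dt)·g`. -/
theorem omegaRel_of_oreExtension
    {k R A : Type u} [Field k] [Ring R] [Algebra k R] [Ring A] [Algebra k A]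
    (α : R →ₐ[k] R) (δ : R →ₗ[k] R)
    (hδ : ∀ a b : R, δ (a * b) = δ a * b + α a * δ b)
    (ι : R →ₐ[k] A) (t : A) (hA : IsOreExtension k R α δ A ι t)
    (Ω : Type u) [AddCommGroup Ω] [Module A Ω] [Module Aᵐᵒᵖ Ω] (d : A →+ Ω)
    (hΩ : IsRelativeDifferentials R A ι.toRingHom Ω d)
    (T : Type u) [AddCommGroup T] [Module A T] [Module Aᵐᵒᵖ T] (τ : A →+ A →+ T)
    (hT : IsTwistedTensor R A ι.toRingHom α T τ)
    (hTl : ∀ (a f g : A), a • τ f g = τ (a * f) g)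
    (hTr : ∀ (b f g : A), MulOpposite.op b • τ f g = τ f (g * b)) :
    ∃ ψ : T ≃+ Ω,
      (∀ (a : A) (x : T), ψ (a • x) = a • ψ x) ∧
      (∀ (b : A) (x : T), ψ (MulOpposite.op b • x) = MulOpposite.op b • ψ x) ∧
      ∀ f g : A, ψ (τ f g) = MulOpposite.op g • (f • d t) := by  classical
  have hde : ∀ r : R, d (ι r) = 0 := fun r => hΩ.d_eta r
  have d1 : d (1 : A) = 0 := by
    have h := hde 1; rwa [map_one] at h
  have keyΩ : ∀ r : R, ι (α r) • d t = MulOpposite.op (ι r) • d t := by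
    intro r
    have h1 := hΩ.leibniz t (ι r)
    rw [hA.rel r, map_add, hΩ.leibniz (ι (α r)) t] at h1
    simp only [hde, smul_zero, add_zero, zero_add] at h1
    exact h1
  have comm_d : ∀ a b x : A,
      MulOpposite.op b • (a • d x) = a • (MulOpposite.op b • d x) := by
    intro a b x
    have E := congrArg d (mul_assoc a x b)
    rw [hΩ.leibniz (a * x) b, hΩ.leibniz a (x * b), hΩ.leibniz a x, hΩ.leibniz x b,
      smul_add, smul_add, MulOpposite.op_mul,
      mul_smul (MulOpposite.op b) (MulOpposite.op x) (d a),
      smul_smul a x (d b), add_assoc] at E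
    exact add_right_cancel (add_left_cancel E)
  have text : ∀ (C : Type u) [AddCommGroup C] (F G : T →+ C),
      (∀ f g : A, F (τ f g) = G (τ f g)) → F = G := by
    intro C _ F G h
    obtain ⟨φ, hφ, huniq⟩ := hT.universal C
      { toFun := fun f => F.comp (τ f)
        map_zero' := by ext g; simp
        map_add' := fun f₁ f₂ => by ext g; simp }
      (fun f r g => by
        simp only [AddMonoidHom.coe_mk, ZeroHom.coe_mk, AddMonoidHom.comp_apply]
        rw [hT.balanced])
    have hF : F = φ := huniq F fun f g => rfl
    have hG : G = φ := huniq G fun f g => (h f g).symm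
    rw [hF, hG]
  have keyT : ∀ r : R, MulOpposite.op (ι r) • (τ 1 1 : T) = ι (α r) • τ 1 1 := by
    intro r
    rw [hTr, hTl, one_mul, mul_one]
    have h := (hT.balanced 1 r 1).symm
    simpa using h
  haveI hsc : SMulCommClass A Aᵐᵒᵖ T := by
    constructor
    intro a b x
    induction b using MulOpposite.rec' with
    | h b =>
      have h := text T
        ((DistribMulAction.toAddMonoidHom T a).comp
          (DistribMulAction.toAddMonoidHom T (MulOpposite.op b)))
        ((DistribMulAction.toAddMonoidHom T (MulOpposite.op b)).comp
          (DistribMulAction.toAddMonoidHom T a))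
        (fun f g => by
          simp only [AddMonoidHom.comp_apply, DistribMulAction.toAddMonoidHom_apply]
          rw [hTr, hTl, hTl, hTr])
      exact DFunLike.congr_fun h x
  obtain ⟨ψ₀, hψ₀, hψ₀u⟩ := hT.universal Ω
    { toFun := fun f =>
        { toFun := fun g => MulOpposite.op g • (f • d t)
          map_zero' := by simp
          map_add' := fun g₁ g₂ => by
            show MulOpposite.op (g₁ + g₂) • f • d t = _
            rw [MulOpposite.op_add, add_smul] }
      map_zero' := by ext g; simp
      map_add' := fun f₁ f₂ => by
        ext g
        simp only [AddMonoidHom.coe_mk, ZeroHom.coe_mk, AddMonoidHom.add_apply]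
        rw [add_smul, smul_add] }
    (fun f r g => by
      simp only [AddMonoidHom.coe_mk, ZeroHom.coe_mk, AlgHom.toRingHom_eq_coe,
        RingHom.coe_coe]
      rw [MulOpposite.op_mul, mul_smul (MulOpposite.op g) (MulOpposite.op (ι r)),
        comm_d f (ι r) t, ← keyΩ r, smul_smul])
  have hψτ : ∀ f g : A, ψ₀ (τ f g) = MulOpposite.op g • (f • d t) := fun f g => hψ₀ f g
  have ψ₀l : ∀ (a : A) (x : T), ψ₀ (a • x) = a • ψ₀ x := by
    intro a x
    have h := text Ω (ψ₀.comp (DistribMulAction.toAddMonoidHom T a))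
      ((DistribMulAction.toAddMonoidHom Ω a).comp ψ₀)
      (fun f g => by
        simp only [AddMonoidHom.comp_apply, DistribMulAction.toAddMonoidHom_apply]
        rw [hTl, hψτ, hψτ, comm_d (a * f) g t, ← smul_smul, ← comm_d f g t])
    exact DFunLike.congr_fun h x
  have ψ₀r : ∀ (b : A) (x : T),
      ψ₀ (MulOpposite.op b • x) = MulOpposite.op b • ψ₀ x := by
    intro b x
    have h := text Ω (ψ₀.comp (DistribMulAction.toAddMonoidHom T (MulOpposite.op b)))
      ((DistribMulAction.toAddMonoidHom Ω (MulOpposite.op b)).comp ψ₀)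
      (fun f g => by
        simp only [AddMonoidHom.comp_apply, DistribMulAction.toAddMonoidHom_apply]
        rw [hTr, hψτ, hψτ, MulOpposite.op_mul, mul_smul])
    exact DFunLike.congr_fun h x
  -- the twisted square-zero extension
  let u : TrivSqZeroExt A T := TrivSqZeroExt.inl t + TrivSqZeroExt.inr (τ 1 1)
  have hufst : u.fst = t := by
    simp only [u, TrivSqZeroExt.fst_add, TrivSqZeroExt.fst_inl, TrivSqZeroExt.fst_inr,
      add_zero]
  have husnd : u.snd = τ 1 1 := by
    simp only [u, TrivSqZeroExt.snd_add, TrivSqZeroExt.snd_inl, TrivSqZeroExt.snd_inr,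
      zero_add]
  have hc : ∀ a : A, a = ((hA.repr a).choose).sum fun i r => ι r * t ^ i :=
    fun a => (hA.repr a).choose_spec.1
  have huc : ∀ (a : A) (c' : ℕ →₀ R), (a = c'.sum fun i r => ι r * t ^ i) →
      c' = (hA.repr a).choose := fun a c' h' => (hA.repr a).choose_spec.2 c' h'
  let Φ : A → TrivSqZeroExt A T := fun a =>
    ((hA.repr a).choose).sum fun i r => TrivSqZeroExt.inl (ι r) * u ^ i
  have hΦdef : ∀ a, Φ a = ((hA.repr a).choose).sum
      fun i r => TrivSqZeroExt.inl (ι r) * u ^ i := fun _ => rfl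
  have hΦ_eq : ∀ (a : A) (c' : ℕ →₀ R), (a = c'.sum fun i r => ι r * t ^ i) →
      Φ a = c'.sum fun i r => TrivSqZeroExt.inl (ι r) * u ^ i := by
    intro a c' h'
    rw [hΦdef, ← huc a c' h']
  have phi_basis : ∀ (r : R) (i : ℕ),
      Φ (ι r * t ^ i) = TrivSqZeroExt.inl (ι r) * u ^ i := by
    intro r i
    rw [hΦ_eq (ι r * t ^ i) (Finsupp.single i r)
        (by rw [Finsupp.sum_single_index (by simp)]),
      Finsupp.sum_single_index (by simp)]
  have phi_zero : Φ 0 = 0 := by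
    rw [hΦ_eq 0 0 (by rw [Finsupp.sum_zero_index]), Finsupp.sum_zero_index]
  have phi_add : ∀ a b : A, Φ (a + b) = Φ a + Φ b := by
    intro a b
    have h' : a + b = ((hA.repr a).choose + (hA.repr b).choose).sum
        fun i r => ι r * t ^ i := by
      rw [Finsupp.sum_add_index' (fun i => by simp) (fun i r s => by
        rw [map_add, add_mul]), ← hc a, ← hc b]
    rw [hΦ_eq _ _ h', Finsupp.sum_add_index' (fun i => by simp) (fun i r s => by
      rw [map_add, TrivSqZeroExt.inl_add, add_mul]), ← hΦdef a, ← hΦdef b]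
  let ΦM : A →+ TrivSqZeroExt A T := AddMonoidHom.mk' Φ phi_add
  have hΦM : ∀ a, ΦM a = Φ a := fun _ => rfl
  have phi_left : ∀ (r : R) (a : A),
      Φ (ι r * a) = TrivSqZeroExt.inl (ι r) * Φ a := by
    intro r a
    have h' : ι r * a = (((hA.repr a).choose).mapRange (fun s => r * s)
        (mul_zero r)).sum fun i s => ι s * t ^ i := by
      rw [Finsupp.sum_mapRange_index (fun i => by simp)]
      conv_lhs => rw [hc a]
      rw [Finsupp.mul_sum]
      exact Finsupp.sum_congr fun i _ => by rw [map_mul, mul_assoc]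
    rw [hΦ_eq _ _ h', Finsupp.sum_mapRange_index (fun i => by simp)]
    conv_rhs => rw [hΦdef a, Finsupp.mul_sum]
    exact Finsupp.sum_congr fun i _ => by
      rw [map_mul, TrivSqZeroExt.inl_mul, mul_assoc]
  have keyE : ∀ s : R, u * TrivSqZeroExt.inl (ι s)
      = TrivSqZeroExt.inl (ι (α s)) * u + TrivSqZeroExt.inl (ι (δ s)) := by
    intro s
    refine TrivSqZeroExt.ext ?_ ?_
    · simp only [TrivSqZeroExt.fst_mul, TrivSqZeroExt.fst_add, TrivSqZeroExt.fst_inl,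
        hufst]
      exact hA.rel s
    · simp only [TrivSqZeroExt.snd_mul, TrivSqZeroExt.snd_add, TrivSqZeroExt.snd_inl,
        TrivSqZeroExt.fst_inl, hufst, husnd, smul_zero, zero_add, add_zero]
      exact keyT s
  have phi_t : ∀ a : A, Φ (t * a) = u * Φ a := by
    intro a
    have hbasis : ∀ (s : R) (i : ℕ),
        Φ (t * (ι s * t ^ i)) = u * Φ (ι s * t ^ i) := by
      intro s i
      have h2 : t * (ι s * t ^ i) = ι (α s) * t ^ (i + 1) + ι (δ s) * t ^ i := by
        rw [← mul_assoc, hA.rel s, add_mul, mul_assoc, ← pow_succ']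
      rw [h2, phi_add, phi_basis, phi_basis, phi_basis, ← mul_assoc, keyE, add_mul,
        pow_succ' u i, ← mul_assoc]
    have h1 : t * a = ((hA.repr a).choose).sum fun i s => t * (ι s * t ^ i) := by
      conv_lhs => rw [hc a]
      rw [Finsupp.mul_sum]
    calc Φ (t * a) = ΦM (((hA.repr a).choose).sum fun i s => t * (ι s * t ^ i)) := by
          rw [hΦM, h1]
      _ = ((hA.repr a).choose).sum fun i s => Φ (t * (ι s * t ^ i)) := by
          rw [map_finsuppSum]; rfl
      _ = ((hA.repr a).choose).sum fun i s => u * (TrivSqZeroExt.inl (ι s) * u ^ i) := by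
          exact Finsupp.sum_congr fun i _ => by rw [hbasis, phi_basis]
      _ = u * Φ a := by rw [hΦdef a, Finsupp.mul_sum]
  have phi_pow : ∀ (n : ℕ) (a : A), Φ (t ^ n * a) = u ^ n * Φ a := by
    intro n
    induction n with
    | zero => intro a; rw [pow_zero, pow_zero, one_mul, one_mul]
    | succ n ih =>
      intro a
      rw [pow_succ' t n, mul_assoc, phi_t, ih, pow_succ' u n, mul_assoc]
  have phi_mul : ∀ a b : A, Φ (a * b) = Φ a * Φ b := by
    intro a b
    have h1 : a * b = ((hA.repr a).choose).sum fun i r => ι r * (t ^ i * b) := by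
      conv_lhs => rw [hc a]
      rw [Finsupp.sum_mul]
      exact Finsupp.sum_congr fun i _ => by rw [mul_assoc]
    calc Φ (a * b) = ΦM (((hA.repr a).choose).sum fun i r => ι r * (t ^ i * b)) := by
          rw [hΦM, h1]
      _ = ((hA.repr a).choose).sum fun i r => Φ (ι r * (t ^ i * b)) := by
          rw [map_finsuppSum]; rfl
      _ = ((hA.repr a).choose).sum fun i r =>
            (TrivSqZeroExt.inl (ι r) * u ^ i) * Φ b := by
          exact Finsupp.sum_congr fun i _ => by
            rw [phi_left, phi_pow, mul_assoc]
      _ = Φ a * Φ b := by rw [hΦdef a, Finsupp.sum_mul]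
  have phi_fst : ∀ a : A, (Φ a).fst = a := by
    intro a
    rw [hΦdef a]
    rw [Finsupp.sum, TrivSqZeroExt.fst_sum]
    conv_rhs => rw [hc a, Finsupp.sum]
    refine Finset.sum_congr rfl fun i _ => ?_
    rw [TrivSqZeroExt.fst_mul, TrivSqZeroExt.fst_pow, TrivSqZeroExt.fst_inl, hufst]
  let Dm : A →+ T := AddMonoidHom.mk' (fun a => (Φ a).snd)
    (fun a b => by
      show (Φ (a + b)).snd = (Φ a).snd + (Φ b).snd
      rw [phi_add, TrivSqZeroExt.snd_add])
  have hD : ∀ a, Dm a = (Φ a).snd := fun _ => rfl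
  have hD0 : ∀ r : R, Dm (ι.toRingHom r) = 0 := by
    intro r
    have h1 : (ι.toRingHom r : A) = ι r * t ^ 0 := by
      rw [pow_zero, mul_one]; rfl
    rw [hD, h1, phi_basis, pow_zero, mul_one, TrivSqZeroExt.snd_inl]
  have hDleib : ∀ a b : A, Dm (a * b) = MulOpposite.op b • Dm a + a • Dm b := by
    intro a b
    rw [hD, hD, hD, phi_mul, TrivSqZeroExt.snd_mul, phi_fst, phi_fst, add_comm]
  have hDt : Dm t = τ 1 1 := by
    have h1 : (t : A) = ι 1 * t ^ 1 := by rw [map_one, one_mul, pow_one]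
    rw [hD, h1, phi_basis, map_one, pow_one, TrivSqZeroExt.inl_one, one_mul, husnd]
  obtain ⟨φ', ⟨hφl, hφr, hφd⟩, -⟩ := hΩ.universal T Dm hD0 hDleib
  have hψω : ψ₀ (τ 1 1) = d t := by
    rw [hψτ, MulOpposite.op_one, one_smul, one_smul]
  have hpow : ∀ n : ℕ, ψ₀ ((u ^ n).snd) = d (t ^ n) := by
    intro n
    induction n with
    | zero => rw [pow_zero, pow_zero, TrivSqZeroExt.snd_one, map_zero, d1]
    | succ n ih =>
      rw [pow_succ, TrivSqZeroExt.snd_mul, map_add, hufst, husnd,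
        TrivSqZeroExt.fst_pow, hufst, ψ₀l, ψ₀r, ih, hψω, pow_succ, hΩ.leibniz,
        add_comm]
  have dcalc : ∀ a : A, ψ₀ (Dm a) = d a := by
    intro a
    have h1 : Dm a = ((hA.repr a).choose).sum fun i r => ι r • (u ^ i).snd := by
      rw [hD, hΦdef a, Finsupp.sum, Finsupp.sum, TrivSqZeroExt.snd_sum]
      refine Finset.sum_congr rfl fun i _ => ?_
      rw [TrivSqZeroExt.snd_mul, TrivSqZeroExt.snd_inl, TrivSqZeroExt.fst_inl,
        smul_zero, add_zero]
    conv_rhs => rw [hc a]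
    rw [h1, map_finsuppSum, map_finsuppSum]
    refine Finsupp.sum_congr fun i _ => ?_
    rw [ψ₀l, hpow, hΩ.leibniz, hde, smul_zero, zero_add]
  obtain ⟨θ, -, hθu⟩ := hΩ.universal Ω d hΩ.d_eta hΩ.leibniz
  have hcomp1 : ψ₀.comp φ' = θ := by
    refine hθu (ψ₀.comp φ') ⟨?_, ?_, ?_⟩
    · intro a x
      simp only [AddMonoidHom.comp_apply]
      rw [hφl, ψ₀l]
    · intro b x
      simp only [AddMonoidHom.comp_apply]
      rw [hφr, ψ₀r]
    · intro a
      simp only [AddMonoidHom.comp_apply]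
      rw [hφd, dcalc]
  have hcomp2 : AddMonoidHom.id Ω = θ :=
    hθu (AddMonoidHom.id Ω) ⟨fun a x => rfl, fun b x => rfl, fun a => rfl⟩
  have hid : ψ₀.comp φ' = AddMonoidHom.id Ω := by rw [hcomp1, hcomp2]
  have hidT : φ'.comp ψ₀ = AddMonoidHom.id T := by
    refine text T (φ'.comp ψ₀) (AddMonoidHom.id T) fun f g => ?_
    simp only [AddMonoidHom.comp_apply, AddMonoidHom.id_apply]
    rw [hψτ, hφr, hφl, hφd, hDt, hTl, mul_one, hTr, one_mul]
  exact ⟨AddEquiv.mk ⟨ψ₀, φ', fun x => DFunLike.congr_fun hidT x,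
      fun x => DFunLike.congr_fun hid x⟩ ψ₀.map_add,
    fun a x => ψ₀l a x, fun b x => ψ₀r b x, fun f g => hψτ f g⟩
end

section
/- Let R be an algebra, α an endomorphism of R, δ an α-derivation, and A = R[t; α, δ]. Define the R-linear map D : A → A_α ⊗_R A by D(r·tⁿ) = Σ_{k=0}^{n-1} r·t^k ⊗ t^{n-k-1}. Then D is an R-derivation: D is left-R-linear, D(t^n · r) = D(t^n)·r for all r ∈ R, and D(fg) = D(f)·g + f·D(g) for all f, g ∈ A. -/
universe u

/-- Let `A = R[t; α, δ]` and let `T = A_α ⊗_R A` (an `A`-bimodule via outer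
multiplications).  The additive map `D : A → T` defined by
`D(r·tⁿ) = ∑_{k=0}^{n-1} r·t^k ⊗ t^{n-k-1}` is an `R`-derivation: it is
left-`R`-linear, satisfies `D(tⁿ·r) = D(tⁿ)·r`, and the Leibniz rule
`D(fg) = D(f)·g + f·D(g)` for all `f, g ∈ A`. -/
theorem ore_derivation_into_twisted_tensor
    {k R A : Type u} [Field k] [Ring R] [Algebra k R] [Ring A] [Algebra k A]
    (α : R →ₐ[k] R) (δ : R →ₗ[k] R)
    (hδ : ∀ a b : R, δ (a * b) = δ a * b + α a * δ b)
    (ι : R →ₐ[k] A) (t : A) (hA : IsOreExtension k R α δ A ι t)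
    (T : Type u) [AddCommGroup T] [Module A T] [Module Aᵐᵒᵖ T] (τ : A →+ A →+ T)
    (hT : IsTwistedTensor R A ι.toRingHom α T τ)
    (hTl : ∀ (a f g : A), a • τ f g = τ (a * f) g)
    (hTr : ∀ (b f g : A), MulOpposite.op b • τ f g = τ f (g * b))
    (D : A →+ T)
    (hD : ∀ (r : R) (n : ℕ),
      D (ι r * t ^ n) = ∑ j ∈ Finset.range n, τ (ι r * t ^ j) (t ^ (n - j - 1))) :
    (∀ (r : R) (f : A), D (ι r * f) = ι r • D f) ∧
    (∀ (n : ℕ) (r : R), D (t ^ n * ι r) = MulOpposite.op (ι r) • D (t ^ n)) ∧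
    (∀ f g : A, D (f * g) = MulOpposite.op g • D f + f • D g) := by
  classical
  -- extensionality for additive maps out of T
  have key : ∀ (φ ψ : T →+ T), (∀ f g : A, φ (τ f g) = ψ (τ f g)) → ∀ x, φ x = ψ x := by
    intro φ ψ h x
    let g' : A →+ A →+ T := AddMonoidHom.mk' (fun f => φ.comp (τ f))
      (fun f₁ f₂ => by ext g; simp)
    obtain ⟨Φ, -, hu⟩ := hT.universal T g' (fun f r g => by
      show φ (τ (f * ι.toRingHom (α r)) g) = φ (τ f (ι.toRingHom r * g))
      rw [hT.balanced])
    rw [hu φ (fun f g => rfl), hu ψ (fun f g => (h f g).symm)]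
  -- the two actions commute
  have scomm : ∀ (a b : A) (x : T),
      a • (MulOpposite.op b • x) = MulOpposite.op b • (a • x) := by
    intro a b x
    refine key ((DistribMulAction.toAddMonoidHom T a).comp
        (DistribMulAction.toAddMonoidHom T (MulOpposite.op b)))
      ((DistribMulAction.toAddMonoidHom T (MulOpposite.op b)).comp
        (DistribMulAction.toAddMonoidHom T a)) (fun f g => ?_) x
    simp only [AddMonoidHom.coe_comp, Function.comp_apply,
      DistribMulAction.toAddMonoidHom_apply, hTl, hTr]
  have bal : ∀ (f : A) (r : R) (g : A), τ (f * ι (α r)) g = τ f (ι r * g) := by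
    intro f r g
    simpa using hT.balanced f r g
  have hD0 : ∀ r : R, D (ι r) = 0 := by
    intro r
    simpa using hD r 0
  -- right multiplication by t, on monomials
  have hMt_mono : ∀ (c : R) (n : ℕ),
      D (ι c * t ^ n * t)
        = MulOpposite.op t • D (ι c * t ^ n) + (ι c * t ^ n) • τ 1 1 := by
    intro c n
    rw [mul_assoc, ← pow_succ, hD c (n + 1), Finset.sum_range_succ, hD c n,
      Finset.smul_sum, hTl, mul_one]
    congr 1
    · refine Finset.sum_congr rfl fun j hj => ?_
      rw [Finset.mem_range] at hj
      rw [hTr]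
      congr 1
      rw [← pow_succ]
      congr 1
      omega
    · norm_num
  -- right multiplication by t, in general
  have hMt : ∀ f : A, D (f * t) = MulOpposite.op t • D f + f • τ 1 1 := by
    intro f
    obtain ⟨c, hc, -⟩ := hA.repr f
    rw [hc, Finsupp.sum, Finset.sum_mul, map_sum, map_sum, Finset.smul_sum,
      Finset.sum_smul, ← Finset.sum_add_distrib]
    exact Finset.sum_congr rfl fun i _ => hMt_mono (c i) i
  -- right multiplication by ι r, on monomials
  have hLr_mono : ∀ (n : ℕ) (c r : R),
      D (ι c * t ^ n * ι r) = MulOpposite.op (ι r) • D (ι c * t ^ n) := by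
    intro n
    induction n with
    | zero =>
      intro c r
      rw [pow_zero, mul_one, ← map_mul, hD0, hD0, smul_zero]
    | succ n ih =>
      intro c r
      have hexp : ι c * t ^ (n + 1) * ι r
          = ι c * t ^ n * ι (α r) * t + ι c * t ^ n * ι (δ r) := by
        rw [pow_succ, ← mul_assoc, mul_assoc (ι c * t ^ n) t (ι r), hA.rel r, mul_add,
          ← mul_assoc]
      have h1 : ι c * t ^ (n + 1) = ι c * t ^ n * t := by
        rw [pow_succ, mul_assoc]
      have e1 : (MulOpposite.op (ι r) * MulOpposite.op t : Aᵐᵒᵖ)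
          = MulOpposite.op t * MulOpposite.op (ι (α r)) + MulOpposite.op (ι (δ r)) := by
        rw [← MulOpposite.op_mul, hA.rel r, MulOpposite.op_add, MulOpposite.op_mul]
      have e2 : MulOpposite.op (ι r) • ((ι c * t ^ n) • (τ 1 1 : T))
          = (ι c * t ^ n * ι (α r)) • (τ 1 1 : T) := by
        rw [← scomm, hTr, hTl, hTl, one_mul, mul_one, mul_one, bal, mul_one]
      rw [hexp, map_add, hMt (ι c * t ^ n * ι (α r)), ih c (α r), ih c (δ r), h1,
        hMt_mono c n, smul_add, e2,
        ← mul_smul (MulOpposite.op (ι r)) (MulOpposite.op t) (D (ι c * t ^ n)), e1,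
        add_smul, mul_smul (MulOpposite.op t) (MulOpposite.op (ι (α r))) (D (ι c * t ^ n))]
      abel
  -- right multiplication by ι r, in general
  have hLr : ∀ (f : A) (r : R), D (f * ι r) = MulOpposite.op (ι r) • D f := by
    intro f r
    obtain ⟨c, hc, -⟩ := hA.repr f
    rw [hc, Finsupp.sum, Finset.sum_mul, map_sum, map_sum, Finset.smul_sum]
    exact Finset.sum_congr rfl fun i _ => hLr_mono i (c i) r
  -- left R-linearity
  have hLl : ∀ (r : R) (f : A), D (ι r * f) = ι r • D f := by
    intro r f
    obtain ⟨c, hc, -⟩ := hA.repr f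
    rw [hc, Finsupp.sum, Finset.mul_sum, map_sum, map_sum, Finset.smul_sum]
    refine Finset.sum_congr rfl fun i _ => ?_
    rw [← mul_assoc, ← map_mul, hD, hD, Finset.smul_sum]
    refine Finset.sum_congr rfl fun j _ => ?_
    rw [hTl, map_mul ι r (c i), mul_assoc]
  -- Leibniz on monomials
  have hLeib_mono : ∀ (f : A) (c : R) (n : ℕ),
      D (f * (ι c * t ^ n))
        = MulOpposite.op (ι c * t ^ n) • D f + f • D (ι c * t ^ n) := by
    intro f c n
    induction n with
    | zero => rw [pow_zero, mul_one, hLr, hD0, smul_zero, add_zero]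
    | succ n ih =>
      have h1 : ι c * t ^ (n + 1) = ι c * t ^ n * t := by
        rw [pow_succ, mul_assoc]
      rw [h1, ← mul_assoc f (ι c * t ^ n) t, hMt (f * (ι c * t ^ n)), ih,
        hMt (ι c * t ^ n), smul_add, smul_add, MulOpposite.op_mul (ι c * t ^ n) t,
        mul_smul (MulOpposite.op t) (MulOpposite.op (ι c * t ^ n)) (D f),
        scomm f t (D (ι c * t ^ n)), ← mul_smul f (ι c * t ^ n) (τ 1 1)]
      abel
  -- Leibniz in general
  have goal3 : ∀ f g : A, D (f * g) = MulOpposite.op g • D f + f • D g := by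
    intro f g
    obtain ⟨c, hc, -⟩ := hA.repr g
    have hop : MulOpposite.op (∑ a ∈ c.support, ι (c a) * t ^ a)
        = ∑ a ∈ c.support, MulOpposite.op (ι (c a) * t ^ a) :=
      map_sum (MulOpposite.opAddEquiv : A ≃+ Aᵐᵒᵖ) _ _
    rw [hc, Finsupp.sum, Finset.mul_sum, map_sum, map_sum, hop,
      Finset.sum_smul, Finset.smul_sum, ← Finset.sum_add_distrib]
    exact Finset.sum_congr rfl fun i _ => hLeib_mono f (c i) i
  exact ⟨hLl, fun n r => hLr (t ^ n) r, goal3⟩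
end

section
/- Let R be an algebra and α an automorphism of R, and let A = R[t, t⁻¹; α] be the Laurent Ore extension. Then Ω¹_R(A) ≅ A_α ⊗_R A as A-bimodules, via f ⊗ g ↦ f·(dt)·g, with inverse induced by the derivation D(r·tⁿ) = Σ_{k=0}^{n-1} r·t^k ⊗ t^{n-k-1} for n ≥ 0 and D(r·tⁿ) = -Σ_{k=1}^{|n|} r·t^{-k} ⊗ t^{n+k-1} for n < 0. -/
universe u

/-- Integer powers of `t` in terms of `t` and its inverse `s`. -/
def lpow {A : Type u} [Ring A] (t s : A) : ℤ → A :=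
  fun n => if 0 ≤ n then t ^ n.toNat else s ^ (-n).toNat

/-- `A` (with embedding `ι`, invertible element `t` and its inverse `s`) is the
Laurent Ore extension `R[t, t⁻¹; α]`: the relation `t·r = α(r)·t` holds and every
element of `A` is uniquely a finite sum `∑_{i ∈ ℤ} ι(rᵢ)·tⁱ`. -/
structure IsLaurentOreExtension (k : Type u) [Field k] (R : Type u) [Ring R] [Algebra k R]
    (α : R → R) (A : Type u) [Ring A] [Algebra k A] (ι : R →ₐ[k] A) (t s : A) : Prop where
  rel : ∀ r : R, t * ι r = ι (α r) * t
  mul_inv : t * s = 1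
  inv_mul : s * t = 1
  repr : ∀ a : A, ∃! c : ℤ →₀ R, a = c.sum fun i r => ι r * lpow t s i

/-! The inverse of `f ⊗ g ↦ f·dt·g` comes from the universal property of `Ω¹_R(A)` applied to
the explicit derivation `D : A → A_α ⊗_R A` of the statement. `D` is additive by construction
on the `R`-basis `(tⁿ)`, and the Leibniz rule `D(ab) = D(a)·b + a·D(b)` holds for `b = ι r`
(termwise, by the balancing `f·α(r) ⊗ g = f ⊗ r·g`), for `b = t` (by the recursion
`D(r tⁿ⁺¹) = D(r tⁿ)·t + r tⁿ ⊗ 1`), hence for `b = t⁻¹` and for all products, and these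
generate `A`. Both composites are identities by the uniqueness halves of the two universal
properties: on `A_α ⊗_R A` they fix every `f ⊗ g`, and on `Ω¹_R(A)` the derivations `ψ ∘ D`
and `d` agree on `ι(R)` and on `t`. -/

open MulOpposite

section LaurentPower

variable {A : Type*} [Ring A] {t s : A}

theorem lpow_eq_zpow (hts : t * s = 1) (hst : s * t = 1) (n : ℤ) :
    lpow t s n = ((⟨t, s, hts, hst⟩ : Aˣ) ^ n : Aˣ) := by
  cases n with
  | ofNat m => simp [lpow]
  | negSucc m =>
    rw [zpow_negSucc, ← inv_pow]
    simp [lpow]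

theorem lpow_zero : lpow t s 0 = 1 := by simp [lpow]

theorem lpow_one : lpow t s 1 = t := by simp [lpow]

theorem lpow_neg_one : lpow t s (-1) = s := by simp [lpow]

theorem lpow_add (hts : t * s = 1) (hst : s * t = 1) (m n : ℤ) :
    lpow t s (m + n) = lpow t s m * lpow t s n := by
  simp only [lpow_eq_zpow hts hst, zpow_add, Units.val_mul]

theorem lpow_add_one (hts : t * s = 1) (hst : s * t = 1) (n : ℤ) :
    lpow t s (n + 1) = lpow t s n * t := by
  rw [lpow_add hts hst, lpow_one]

theorem lpow_sub_one (hts : t * s = 1) (hst : s * t = 1) (n : ℤ) :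
    lpow t s (n - 1) = lpow t s n * s := by
  rw [sub_eq_add_neg, lpow_add hts hst, lpow_neg_one]

end LaurentPower

section Leibniz

variable {A M : Type*} [Ring A] [AddCommGroup M] [Module A M] [Module Aᵐᵒᵖ M]

def IsLeibnizAt (D : A →+ M) (b : A) : Prop :=
  ∀ a, D (a * b) = op b • D a + a • D b

-- The two actions on `M` need not commute, but they do on the image of a Leibniz map.
theorem op_smul_smul_comm_of_leibniz {D : A →+ M}
    (hD : ∀ a b, D (a * b) = op b • D a + a • D b) (a c e : A) :
    op c • a • D e = a • op c • D e := by
  have h := congrArg D (mul_assoc a e c)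
  rw [hD, hD, hD, hD, smul_add, smul_add, op_mul, mul_smul, mul_smul] at h
  calc op c • a • D e = (op c • op e • D a + op c • a • D e + a • e • D c)
        - op c • op e • D a - a • e • D c := by abel
    _ = a • op c • D e := by rw [h]; abel

variable {D : A →+ M} {b c : A}

theorem IsLeibnizAt.add (hb : IsLeibnizAt D b) (hc : IsLeibnizAt D c) : IsLeibnizAt D (b + c) := by
  intro a
  rw [mul_add, map_add, hb, hc, map_add, op_add, add_smul, smul_add]
  abel

theorem IsLeibnizAt.mul [SMulCommClass A Aᵐᵒᵖ M] (hb : IsLeibnizAt D b) (hc : IsLeibnizAt D c) :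
    IsLeibnizAt D (b * c) := by
  intro a
  rw [← mul_assoc, hc, hb, hc, op_mul, mul_smul, mul_smul, smul_add, smul_add, smul_comm a (op c)]
  abel

theorem IsLeibnizAt.apply_eq_of_mul_eq_one (hD : D 1 = 0) (hb : IsLeibnizAt D b)
    (hbc : b * c = 1) (hcb : c * b = 1) : D c = -(op c • c • D b) := by
  have h := hb c
  rw [hcb, hD, eq_comm, add_eq_zero_iff_eq_neg] at h
  calc D c = op c • op b • D c := by rw [smul_smul, ← op_mul, hbc, op_one, one_smul]
    _ = -(op c • c • D b) := by rw [h, smul_neg]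

theorem IsLeibnizAt.of_mul_eq_one [SMulCommClass A Aᵐᵒᵖ M] (hD : D 1 = 0) (hb : IsLeibnizAt D b)
    (hbc : b * c = 1) (hcb : c * b = 1) : IsLeibnizAt D c := by
  intro a
  have h := hb (a * c)
  rw [mul_assoc, hcb, mul_one] at h
  rw [hb.apply_eq_of_mul_eq_one hD hbc hcb]
  calc D (a * c) = op c • op b • D (a * c) := by rw [smul_smul, ← op_mul, hbc, op_one, one_smul]
    _ = _ := by
      rw [eq_sub_of_add_eq h.symm, smul_sub, smul_neg, smul_comm a (op c), mul_smul,
        sub_eq_add_neg]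

end Leibniz

namespace IsTwistedTensor

variable {R A T : Type u} [Ring R] [Ring A] {η : R →+* A} {α : R → R} [AddCommGroup T]
  {τ : A →+ A →+ T}

theorem hom_ext (hT : IsTwistedTensor R A η α T τ) {C : Type u} [AddCommGroup C]
    {φ₁ φ₂ : T →+ C} (h : ∀ f g, φ₁ (τ f g) = φ₂ (τ f g)) : φ₁ = φ₂ :=
  (hT.universal C (τ.compr₂ φ₁) fun f r g => by simp [hT.balanced]).unique (fun _ _ => rfl)
    fun f g => (h f g).symm

theorem smulCommClass [Module A T] [Module Aᵐᵒᵖ T] (hT : IsTwistedTensor R A η α T τ)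
    (hTl : ∀ a f g, a • τ f g = τ (a * f) g) (hTr : ∀ b f g, op b • τ f g = τ f (g * b)) :
    SMulCommClass A Aᵐᵒᵖ T where
  smul_comm a b x := by
    induction b using MulOpposite.rec' with | h b => ?_
    have := hT.hom_ext
      (φ₁ := (DistribSMul.toAddMonoidHom T a).comp (DistribSMul.toAddMonoidHom T (op b)))
      (φ₂ := (DistribSMul.toAddMonoidHom T (op b)).comp (DistribSMul.toAddMonoidHom T a))
      fun f g => by simp [hTl, hTr]
    exact DFunLike.congr_fun this x

end IsTwistedTensor

namespace IsRelativeDifferentials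

variable {R A Ω : Type u} [Ring R] [Ring A] {η : R →+* A} [AddCommGroup Ω] [Module A Ω]
  [Module Aᵐᵒᵖ Ω] {d : A →+ Ω}

theorem hom_ext (hΩ : IsRelativeDifferentials R A η Ω d) {M : Type u} [AddCommGroup M]
    [Module A M] [Module Aᵐᵒᵖ M] {φ₁ φ₂ : Ω →+ M}
    (hφ₁ : (∀ (a : A) x, φ₁ (a • x) = a • φ₁ x) ∧ ∀ (b : A) x, φ₁ (op b • x) = op b • φ₁ x)
    (hφ₂ : (∀ (a : A) x, φ₂ (a • x) = a • φ₂ x) ∧ ∀ (b : A) x, φ₂ (op b • x) = op b • φ₂ x)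
    (h : ∀ a, φ₁ (d a) = φ₂ (d a)) : φ₁ = φ₂ :=
  (hΩ.universal M (φ₁.comp d) (fun r => by simp [hΩ.d_eta])
    fun a b => by simp [hΩ.leibniz, hφ₁.1, hφ₁.2]).unique
    ⟨hφ₁.1, hφ₁.2, fun _ => rfl⟩ ⟨hφ₂.1, hφ₂.2, fun a => (h a).symm⟩

theorem exists_twistedTensor_hom {t : A} {α : R → R} (hΩ : IsRelativeDifferentials R A η Ω d)
    (hrel : ∀ r, t * η r = η (α r) * t) {T : Type u} [AddCommGroup T] [Module A T]
    [Module Aᵐᵒᵖ T] {τ : A →+ A →+ T} (hT : IsTwistedTensor R A η α T τ)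
    (hTl : ∀ a f g, a • τ f g = τ (a * f) g) (hTr : ∀ b f g, op b • τ f g = τ f (g * b)) :
    ∃ ψ : T →+ Ω, (∀ f g, ψ (τ f g) = op g • f • d t) ∧
      (∀ (a : A) x, ψ (a • x) = a • ψ x) ∧ ∀ (b : A) x, ψ (op b • x) = op b • ψ x := by
  have hcomm := op_smul_smul_comm_of_leibniz hΩ.leibniz
  have htwist : ∀ r, η (α r) • d t = op (η r) • d t := fun r => by
    simpa [hΩ.leibniz, hΩ.d_eta] using congrArg d (hrel r).symm
  let g₀ : A →+ A →+ Ω :=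
    ((smulAddHom Aᵐᵒᵖ Ω).comp opAddEquiv.toAddMonoidHom).flip.comp ((smulAddHom A Ω).flip (d t))
  obtain ⟨ψ, hψ, -⟩ := hT.universal Ω g₀ fun f r g => by
    simp [g₀, mul_smul, htwist, hcomm]
  refine ⟨ψ, hψ, fun a x => ?_, fun b x => ?_⟩
  · have := hT.hom_ext (φ₁ := ψ.comp (DistribSMul.toAddMonoidHom T a))
      (φ₂ := (DistribSMul.toAddMonoidHom Ω a).comp ψ) fun f g => by
        simp only [AddMonoidHom.comp_apply, DistribSMul.toAddMonoidHom_apply, hTl, hψ]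
        change op g • (a * f) • d t = a • op g • f • d t
        rw [hcomm, hcomm, mul_smul]
    exact DFunLike.congr_fun this x
  · have := hT.hom_ext (φ₁ := ψ.comp (DistribSMul.toAddMonoidHom T (op b)))
      (φ₂ := (DistribSMul.toAddMonoidHom Ω (op b)).comp ψ) fun f g => by
        simp [hψ, hTr, g₀, mul_smul]
    exact DFunLike.congr_fun this x

end IsRelativeDifferentials

namespace IsLaurentOreExtension

variable {k R A : Type u} [Field k] [Ring R] [Algebra k R] [Ring A] [Algebra k A]
  {α : R ≃ₐ[k] R} {ι : R →ₐ[k] A} {t s : A} (hA : IsLaurentOreExtension k R α A ι t s)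
include hA

theorem lpow_mul_comm (n : ℤ) (r : R) : lpow t s n * ι r = ι ((α ^ n) r) * lpow t s n := by
  induction n using Int.induction_on generalizing r with
  | zero => simp [lpow_zero]
  | succ n ih =>
    rw [lpow_add_one hA.mul_inv hA.inv_mul, mul_assoc, hA.rel, ← mul_assoc, ih, mul_assoc,
      zpow_add_one, AlgEquiv.mul_apply]
  | pred n ih =>
    have hs : s * ι r = ι (α⁻¹ r) * s := by
      have h := hA.rel (α⁻¹ r)
      rw [← AlgEquiv.mul_apply, mul_inv_cancel, AlgEquiv.one_apply] at h
      calc s * ι r = s * (ι r * t) * s := by rw [mul_assoc, mul_assoc, hA.mul_inv, mul_one]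
        _ = ι (α⁻¹ r) * s := by rw [← h, ← mul_assoc, hA.inv_mul, one_mul]
    rw [lpow_sub_one hA.mul_inv hA.inv_mul, mul_assoc, hs, ← mul_assoc, ih, mul_assoc,
      zpow_sub_one, AlgEquiv.mul_apply]

theorem induction_on {P : A → Prop} (a : A) (hadd : ∀ x y, P x → P y → P (x + y))
    (hmono : ∀ n r, P (ι r * lpow t s n)) : P a := by
  obtain ⟨c, rfl, -⟩ := hA.repr a
  exact Finset.sum_induction _ P hadd (by simpa using hmono 0 0) fun n _ => hmono n (c n)

theorem isLeibnizAt_of_monomial {M : Type*} [AddCommGroup M] [Module A M] [Module Aᵐᵒᵖ M]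
    {D : A →+ M} {b : A}
    (h : ∀ n r, D (ι r * lpow t s n * b) = op b • D (ι r * lpow t s n) + (ι r * lpow t s n) • D b) :
    IsLeibnizAt D b := fun a =>
  hA.induction_on (P := fun a => D (a * b) = op b • D a + a • D b) a (fun x y hx hy => by
    rw [add_mul, map_add, hx, hy, map_add, smul_add, add_smul]; abel) h

theorem closure_induction {P : A → Prop} (a : A) (hι : ∀ r, P (ι r)) (ht : P t) (hs : P s)
    (hadd : ∀ x y, P x → P y → P (x + y)) (hmul : ∀ x y, P x → P y → P (x * y)) : P a := by
  refine hA.induction_on a hadd fun n r => hmul _ _ (hι r) ?_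
  induction n using Int.induction_on with
  | zero => simpa [lpow_zero] using hι 1
  | succ n ih => rw [lpow_add_one hA.mul_inv hA.inv_mul]; exact hmul _ _ ih ht
  | pred n ih => rw [lpow_sub_one hA.mul_inv hA.inv_mul]; exact hmul _ _ ih hs

theorem leibniz_ext {M : Type*} [AddCommGroup M] [Module A M] [Module Aᵐᵒᵖ M] {D₁ D₂ : A →+ M}
    (hD₁ : ∀ a b, D₁ (a * b) = op b • D₁ a + a • D₁ b)
    (hD₂ : ∀ a b, D₂ (a * b) = op b • D₂ a + a • D₂ b)
    (hι₁ : ∀ r, D₁ (ι r) = 0) (hι₂ : ∀ r, D₂ (ι r) = 0) (ht : D₁ t = D₂ t) (a : A) :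
    D₁ a = D₂ a := by
  have hs : ∀ D : A →+ M, (∀ a b, D (a * b) = op b • D a + a • D b) → (∀ r, D (ι r) = 0) →
      D s = -(op s • s • D t) := fun D hD hι =>
    IsLeibnizAt.apply_eq_of_mul_eq_one (by simpa using hι 1) (hD · t) hA.mul_inv hA.inv_mul
  refine hA.closure_induction (P := fun a => D₁ a = D₂ a) a
    (fun r => (hι₁ r).trans (hι₂ r).symm) ht ?_
    (fun x y hx hy => by rw [map_add, map_add, hx, hy])
    (fun x y hx hy => by rw [hD₁, hD₂, hx, hy])
  rw [hs D₁ hD₁ hι₁, hs D₂ hD₂ hι₂, ht]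

noncomputable def coeffEquiv : (ℤ →₀ R) ≃+ A :=
  AddEquiv.ofBijective
    (Finsupp.liftAddHom fun n => (AddMonoidHom.mulRight (lpow t s n)).comp ι.toAddMonoidHom)
    ⟨fun c₁ c₂ h => (hA.repr _).unique (Finsupp.liftAddHom_apply _ c₁)
      (h.trans (Finsupp.liftAddHom_apply _ c₂)),
     fun a => (hA.repr a).exists.imp fun _ hc => hc.symm⟩

theorem coeffEquiv_single (n : ℤ) (r : R) :
    hA.coeffEquiv (Finsupp.single n r) = ι r * lpow t s n := by
  simp [coeffEquiv]

end IsLaurentOreExtension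

section MonomialDeriv

variable {R A T F : Type*} [Ring R] [Ring A] [AddCommGroup T] [FunLike F R A]
  [AddMonoidHomClass F R A] (ι : F) (t s : A) (τ : A →+ A →+ T)

def monomialDeriv (n : ℤ) : R →+ T where
  toFun r :=
    if 0 ≤ n then
      ∑ j ∈ Finset.range n.toNat, τ (ι r * lpow t s j) (lpow t s (n - j - 1))
    else
      -∑ j ∈ Finset.range (-n).toNat, τ (ι r * lpow t s (-(j + 1))) (lpow t s (n + j))
  map_zero' := by simp
  map_add' r r' := by split_ifs <;> simp [add_mul, Finset.sum_add_distrib, add_comm]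

theorem monomialDeriv_natCast (m : ℕ) (r : R) :
    monomialDeriv ι t s τ m r =
      ∑ j ∈ Finset.range m, τ (ι r * lpow t s j) (lpow t s (m - j - 1)) := by
  simp [monomialDeriv]

theorem monomialDeriv_neg_natCast (m : ℕ) (r : R) :
    monomialDeriv ι t s τ (-m) r =
      -∑ j ∈ Finset.range m, τ (ι r * lpow t s (-(j + 1))) (lpow t s (-m + j)) := by
  rcases m with _ | m
  · simp [monomialDeriv]
  · rw [monomialDeriv, AddMonoidHom.coe_mk, ZeroHom.coe_mk, if_neg (by omega), neg_neg,
      Int.toNat_natCast]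

variable {t s} in
theorem monomialDeriv_add_one [Module Aᵐᵒᵖ T] (hts : t * s = 1) (hst : s * t = 1)
    (hTr : ∀ b f g, op b • τ f g = τ f (g * b)) (n : ℤ) (r : R) :
    monomialDeriv ι t s τ (n + 1) r =
      op t • monomialDeriv ι t s τ n r + τ (ι r * lpow t s n) 1 := by
  have hstep : ∀ x i, op t • τ x (lpow t s i) = τ x (lpow t s (i + 1)) := fun x i => by
    rw [hTr, lpow_add_one hts hst]
  cases n with
  | ofNat m =>
    rw [Int.ofNat_eq_natCast, ← Nat.cast_add_one, monomialDeriv_natCast, monomialDeriv_natCast,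
      Finset.sum_range_succ, Finset.smul_sum]
    simp only [hstep]
    congr 1
    · refine Finset.sum_congr rfl fun j _ => ?_
      congr 2; push_cast; ring
    · simp [lpow_zero]
  | negSucc m =>
    rw [Int.negSucc_eq, ← Nat.cast_add_one, show -((m + 1 : ℕ) : ℤ) + 1 = -m by push_cast; ring,
      monomialDeriv_neg_natCast, monomialDeriv_neg_natCast, Finset.sum_range_succ, smul_neg,
      smul_add, Finset.smul_sum, hstep]
    simp only [hstep]
    push_cast
    rw [show -((m : ℤ) + 1) + m + 1 = 0 by ring, lpow_zero, neg_add, neg_add_cancel_right]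
    congr 1
    refine Finset.sum_congr rfl fun j _ => ?_
    congr 2; ring

end MonomialDeriv

namespace IsLaurentOreExtension

variable {k R A T : Type u} [Field k] [Ring R] [Algebra k R] [Ring A] [Algebra k A]
  {α : R ≃ₐ[k] R} {ι : R →ₐ[k] A} {t s : A} (hA : IsLaurentOreExtension k R α A ι t s)
  [AddCommGroup T] (τ : A →+ A →+ T)
include hA

theorem op_smul_tensor_monomial [Module Aᵐᵒᵖ T] (hT : IsTwistedTensor R A ι.toRingHom α T τ)
    (hTr : ∀ b f g, op b • τ f g = τ f (g * b)) (r r' : R) (i j : ℤ) :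
    op (ι r) • τ (ι r' * lpow t s i) (lpow t s j)
      = τ (ι (r' * (α ^ (i + j + 1)) r) * lpow t s i) (lpow t s j) := by
  have hb := hT.balanced (ι r' * lpow t s i) ((α ^ j) r) (lpow t s j)
  simp only [AlgHom.toRingHom_eq_coe, RingHom.coe_coe] at hb
  have hexp : (α ^ i) (α ((α ^ j) r)) = (α ^ (i + j + 1)) r := by
    rw [add_assoc, add_comm j, zpow_add, zpow_one_add]; rfl
  rw [hTr, hA.lpow_mul_comm, ← hb, mul_assoc, hA.lpow_mul_comm, ← mul_assoc, ← map_mul, hexp]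

theorem op_smul_monomialDeriv [Module Aᵐᵒᵖ T] (hT : IsTwistedTensor R A ι.toRingHom α T τ)
    (hTr : ∀ b f g, op b • τ f g = τ f (g * b)) (n : ℤ) (r r' : R) :
    op (ι r) • monomialDeriv ι t s τ n r' = monomialDeriv ι t s τ n (r' * (α ^ n) r) := by
  simp only [monomialDeriv, AddMonoidHom.coe_mk, ZeroHom.coe_mk]
  split_ifs
  · rw [Finset.smul_sum]
    refine Finset.sum_congr rfl fun j _ => ?_
    rw [hA.op_smul_tensor_monomial τ hT hTr, show (j : ℤ) + (n - j - 1) + 1 = n by ring]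
  · rw [smul_neg, Finset.smul_sum]
    congr 1
    refine Finset.sum_congr rfl fun j _ => ?_
    rw [hA.op_smul_tensor_monomial τ hT hTr, show -((j : ℤ) + 1) + (n + j) + 1 = n by ring]

noncomputable def laurentDeriv : A →+ T :=
  (Finsupp.liftAddHom (monomialDeriv ι t s τ)).comp hA.coeffEquiv.symm.toAddMonoidHom

theorem laurentDeriv_monomial (n : ℤ) (r : R) :
    hA.laurentDeriv τ (ι r * lpow t s n) = monomialDeriv ι t s τ n r := by
  rw [← hA.coeffEquiv_single]
  simp [laurentDeriv]

theorem laurentDeriv_algebraMap (r : R) : hA.laurentDeriv τ (ι r) = 0 := by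
  simpa [lpow_zero, monomialDeriv] using hA.laurentDeriv_monomial τ 0 r

theorem laurentDeriv_t : hA.laurentDeriv τ t = τ 1 1 := by
  simpa [lpow_one, lpow_zero, monomialDeriv] using hA.laurentDeriv_monomial τ 1 1

theorem isLeibnizAt_algebraMap [Module A T] [Module Aᵐᵒᵖ T]
    (hT : IsTwistedTensor R A ι.toRingHom α T τ)
    (hTr : ∀ b f g, op b • τ f g = τ f (g * b)) (r : R) :
    IsLeibnizAt (hA.laurentDeriv τ) (ι r) := hA.isLeibnizAt_of_monomial fun n r' => by
  rw [mul_assoc, hA.lpow_mul_comm, ← mul_assoc, ← map_mul, laurentDeriv_monomial,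
    laurentDeriv_monomial, laurentDeriv_algebraMap, smul_zero, add_zero,
    hA.op_smul_monomialDeriv τ hT hTr]

theorem isLeibnizAt_t [Module A T] [Module Aᵐᵒᵖ T] (hTl : ∀ a f g, a • τ f g = τ (a * f) g)
    (hTr : ∀ b f g, op b • τ f g = τ f (g * b)) :
    IsLeibnizAt (hA.laurentDeriv τ) t := hA.isLeibnizAt_of_monomial fun n r => by
  rw [mul_assoc, ← lpow_add_one hA.mul_inv hA.inv_mul, laurentDeriv_monomial,
    laurentDeriv_monomial, laurentDeriv_t, monomialDeriv_add_one _ _ hA.mul_inv hA.inv_mul hTr,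
    hTl, mul_one]

theorem laurentDeriv_mul [Module A T] [Module Aᵐᵒᵖ T] (hT : IsTwistedTensor R A ι.toRingHom α T τ)
    (hTl : ∀ a f g, a • τ f g = τ (a * f) g) (hTr : ∀ b f g, op b • τ f g = τ f (g * b))
    (a b : A) :
    hA.laurentDeriv τ (a * b) = op b • hA.laurentDeriv τ a + a • hA.laurentDeriv τ b := by
  have := hT.smulCommClass hTl hTr
  have ht := hA.isLeibnizAt_t τ hTl hTr
  have hD₁ : hA.laurentDeriv τ 1 = 0 := by simpa using hA.laurentDeriv_algebraMap τ 1
  exact hA.closure_induction (P := IsLeibnizAt _) b (hA.isLeibnizAt_algebraMap τ hT hTr) ht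
    (ht.of_mul_eq_one hD₁ hA.mul_inv hA.inv_mul) (fun _ _ => .add) (fun _ _ => .mul) a

end IsLaurentOreExtension

/-- Let `A = R[t, t⁻¹; α]` be a Laurent Ore extension (`α` an automorphism).  Then
`Ω¹_R(A) ≅ A_α ⊗_R A` as `A`-bimodules, via `f ⊗ g ↦ f·(dt)·g`, with inverse induced
by the derivation `D(r·tⁿ) = ∑_{k=0}^{n-1} r·t^k ⊗ t^{n-k-1}` for `n ≥ 0` and
`D(r·tⁿ) = -∑_{k=1}^{|n|} r·t^{-k} ⊗ t^{n+k-1}` for `n < 0`. -/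
theorem omegaRel_of_laurentOreExtension
    {k R A : Type u} [Field k] [Ring R] [Algebra k R] [Ring A] [Algebra k A]
    (α : R ≃ₐ[k] R) (ι : R →ₐ[k] A) (t s : A)
    (hA : IsLaurentOreExtension k R α A ι t s)
    (Ω : Type u) [AddCommGroup Ω] [Module A Ω] [Module Aᵐᵒᵖ Ω] (d : A →+ Ω)
    (hΩ : IsRelativeDifferentials R A ι.toRingHom Ω d)
    (T : Type u) [AddCommGroup T] [Module A T] [Module Aᵐᵒᵖ T] (τ : A →+ A →+ T)
    (hT : IsTwistedTensor R A ι.toRingHom α T τ)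
    (hTl : ∀ (a f g : A), a • τ f g = τ (a * f) g)
    (hTr : ∀ (b f g : A), MulOpposite.op b • τ f g = τ f (g * b)) :
    ∃ ψ : T ≃+ Ω,
      (∀ (a : A) (x : T), ψ (a • x) = a • ψ x) ∧
      (∀ (b : A) (x : T), ψ (MulOpposite.op b • x) = MulOpposite.op b • ψ x) ∧
      (∀ f g : A, ψ (τ f g) = MulOpposite.op g • (f • d t)) ∧
      ∀ (r : R) (n : ℤ), ψ.symm (d (ι r * lpow t s n)) =
        if 0 ≤ n then
          ∑ j ∈ Finset.range n.toNat, τ (ι r * lpow t s j) (lpow t s (n - j - 1))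
        else
          -∑ j ∈ Finset.range (-n).toNat, τ (ι r * lpow t s (-(j + 1))) (lpow t s (n + j)) := by
  obtain ⟨ψ, hψτ, hψl, hψr⟩ := hΩ.exists_twistedTensor_hom hA.rel hT hTl hTr
  obtain ⟨φ, ⟨hφl, hφr, hφd⟩, -⟩ := hΩ.universal T (hA.laurentDeriv τ)
    (hA.laurentDeriv_algebraMap τ) (hA.laurentDeriv_mul τ hT hTl hTr)
  have hφψ : φ.comp ψ = AddMonoidHom.id T := hT.hom_ext fun f g => by
    simp [hψτ, hφl, hφr, hφd, hA.laurentDeriv_t, hTl, hTr]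
  have hψD : ∀ a, ψ (hA.laurentDeriv τ a) = d a := hA.leibniz_ext (D₁ := ψ.comp _)
    (fun a b => by simp [hA.laurentDeriv_mul τ hT hTl hTr, hψl, hψr]) hΩ.leibniz
    (fun r => by simp [hA.laurentDeriv_algebraMap]) hΩ.d_eta (by simp [hA.laurentDeriv_t, hψτ])
  have hψφ : ψ.comp φ = AddMonoidHom.id Ω :=
    hΩ.hom_ext ⟨by simp [hφl, hψl], by simp [hφr, hψr]⟩ ⟨fun _ _ => rfl, fun _ _ => rfl⟩
      fun a => by simp [hφd, hψD]
  refine ⟨ψ.toAddEquiv φ hφψ hψφ, hψl, hψr, hψτ, fun r n => ?_⟩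
  change φ (d _) = _
  rw [hφd, hA.laurentDeriv_monomial]
  rfl
end
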